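/- Every normal subgroup of SL₂(R) containing the set U^op = { [[1, 0],[c, 1]] : c ∈ R^× } of lower unipotent matrices with unit entry is equal to SL₂(R); that is, U^op is contained in no proper normal subgroup of SL₂(R). -/

import Mathlib

/-!
Since the residue field has odd order, `2` is a unit of the local ring `R`, so every element of
`R` is a sum of two units (`c = c/2 + c/2` if `c` is a unit, `c = 1 + (c - 1)` otherwise). Hence a
subgroup containing the lower unipotents with unit entry contains all lower unipotents, and, being
normal, also their conjugates under the Weyl element, the upper unipotents. Over a local ring
these generate `SL₂`: in `g = [[a, b], [c, d]]` one of `a`, `c` is a unit; if `c` is, then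
`g = [[1, (a-1)/c], [0, 1]] · [[1, 0], [c, 1]] · [[1, (d-1)/c], [0, 1]]`, and if `a` is, a lower
unipotent factor turns `c` into `1`.
-/

namespace IsLocalRing

variable {R : Type*} [CommRing R] [IsLocalRing R]

theorem isUnit_two_of_odd_card_residueField (hodd : Odd (Nat.card (ResidueField R))) :
    IsUnit (2 : R) := by
  have : Finite (ResidueField R) := Nat.finite_of_card_ne_zero hodd.pos.ne'
  have : Fintype (ResidueField R) := Fintype.ofFinite _
  rw [← residue_ne_zero_iff_isUnit, map_ofNat]
  intro h2
  have : CharP (ResidueField R) 2 := CharTwo.of_one_ne_zero_of_two_eq_zero one_ne_zero h2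
  have heven := FiniteField.even_card_iff_char_two.1 (ringChar.eq (ResidueField R) 2)
  rw [Nat.card_eq_fintype_card, Nat.odd_iff] at hodd
  omega

theorem exists_units_add_eq_of_isUnit_two (h2 : IsUnit (2 : R)) (c : R) :
    ∃ u v : Rˣ, (u + v : R) = c := by
  by_cases hc : IsUnit c
  · refine ⟨hc.unit * h2.unit⁻¹, hc.unit * h2.unit⁻¹, ?_⟩
    rw [← two_mul, Units.val_mul, IsUnit.unit_spec, mul_left_comm, h2.mul_val_inv, mul_one]
  · have hc1 : IsUnit (1 - c) := isUnit_one_sub_self_of_mem_nonunits c hc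
    exact ⟨1, -hc1.unit, by simp⟩

end IsLocalRing

namespace Matrix.SpecialLinearGroup

variable {R : Type*} [CommRing R]

abbrev lowerUnipotent (c : R) : SpecialLinearGroup (Fin 2) R :=
  transvection (one_ne_zero : (1 : Fin 2) ≠ 0) c

abbrev upperUnipotent (c : R) : SpecialLinearGroup (Fin 2) R :=
  transvection (zero_ne_one : (0 : Fin 2) ≠ 1) c

def weyl : SpecialLinearGroup (Fin 2) R :=
  ⟨!![0, 1; -1, 0], by simp [det_fin_two_of]⟩

@[simp]
lemma coe_lowerUnipotent (c : R) :
    (lowerUnipotent c : Matrix (Fin 2) (Fin 2) R) = !![1, 0; c, 1] := by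
  ext i j; fin_cases i <;> fin_cases j <;> simp [transvection_coe]

@[simp]
lemma coe_upperUnipotent (c : R) :
    (upperUnipotent c : Matrix (Fin 2) (Fin 2) R) = !![1, c; 0, 1] := by
  ext i j; fin_cases i <;> fin_cases j <;> simp [transvection_coe]

lemma lowerUnipotent_add (a b : R) :
    lowerUnipotent (a + b) = lowerUnipotent a * lowerUnipotent b :=
  transvection_add _ a b

lemma upperUnipotent_eq_conj (c : R) :
    upperUnipotent c = weyl * lowerUnipotent (-c) * weyl⁻¹ := by
  rw [eq_mul_inv_iff_mul_eq]
  apply Subtype.ext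
  rw [coe_mul, coe_mul]
  simp [weyl]

lemma eq_upperUnipotent_mul_lowerUnipotent_mul_upperUnipotent (g : SpecialLinearGroup (Fin 2) R)
    (u : Rˣ) (hu : (g : Matrix (Fin 2) (Fin 2) R) 1 0 = u) :
    g = upperUnipotent ((g 0 0 - 1) * ↑u⁻¹) * lowerUnipotent (g 1 0) *
      upperUnipotent ((g 1 1 - 1) * ↑u⁻¹) := by
  have hdet : g 0 0 * g 1 1 - g 0 1 * g 1 0 = 1 := by rw [← det_fin_two]; exact g.2
  have hinv : (↑u⁻¹ : R) * g 1 0 = 1 := by rw [hu, Units.inv_mul]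
  apply Subtype.ext
  rw [coe_mul, coe_mul, coe_lowerUnipotent, coe_upperUnipotent, coe_upperUnipotent, mul_fin_two,
    mul_fin_two, eta_fin_two (g : Matrix (Fin 2) (Fin 2) R)]
  ext i j; fin_cases i <;> fin_cases j <;>
    simp only [Fin.isValue, Fin.zero_eta, Fin.mk_one, of_apply, cons_val', cons_val_zero,
      cons_val_one, cons_val_fin_one, mul_one, mul_zero, zero_add, add_zero, one_mul]
  · linear_combination (1 - g 0 0) * hinv
  · linear_combination (-g 0 1 - (g 0 0 - 1) * (g 1 1 - 1) * ↑u⁻¹) * hinv - ↑u⁻¹ * hdet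
  · linear_combination (1 - g 1 1) * hinv

lemma lowerUnipotent_mul_apply_one_zero (s : R) (g : SpecialLinearGroup (Fin 2) R) :
    (lowerUnipotent s * g : SpecialLinearGroup (Fin 2) R) 1 0 = s * g 0 0 + g 1 0 := by
  rw [coe_mul, coe_lowerUnipotent, mul_apply, Fin.sum_univ_two]
  simp

lemma isUnit_apply_zero_zero_or_isUnit_apply_one_zero [IsLocalRing R]
    (g : SpecialLinearGroup (Fin 2) R) : IsUnit (g 0 0) ∨ IsUnit (g 1 0) := by
  have hdet : IsUnit (g 0 0 * g 1 1 + -(g 0 1 * g 1 0)) := by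
    rw [← sub_eq_add_neg, ← det_fin_two, g.2]
    exact isUnit_one
  exact (IsLocalRing.isUnit_or_isUnit_of_isUnit_add hdet).imp isUnit_of_mul_isUnit_left
    fun h => isUnit_of_mul_isUnit_right ((IsUnit.neg_iff _).1 h)

variable {H : Subgroup (SpecialLinearGroup (Fin 2) R)}

lemma mem_of_isUnit_apply_one_zero (hL : ∀ c, lowerUnipotent c ∈ H)
    (hU : ∀ c, upperUnipotent c ∈ H) {g : SpecialLinearGroup (Fin 2) R}
    (hg : IsUnit (g 1 0)) : g ∈ H := by
  obtain ⟨u, hu⟩ := hg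
  rw [eq_upperUnipotent_mul_lowerUnipotent_mul_upperUnipotent g u hu.symm]
  exact mul_mem (mul_mem (hU _) (hL _)) (hU _)

theorem eq_top_of_unipotent_mem [IsLocalRing R] (hL : ∀ c, lowerUnipotent c ∈ H)
    (hU : ∀ c, upperUnipotent c ∈ H) : H = ⊤ := by
  refine (Subgroup.eq_top_iff' H).2 fun g => ?_
  rcases isUnit_apply_zero_zero_or_isUnit_apply_one_zero g with ⟨u, hu⟩ | hc
  · set s := (1 - g 1 0) * ↑u⁻¹
    have hsg : IsUnit ((lowerUnipotent s * g : SpecialLinearGroup (Fin 2) R) 1 0) := by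
      rw [lowerUnipotent_mul_apply_one_zero, ← hu, mul_assoc, Units.inv_mul, mul_one,
        sub_add_cancel]
      exact isUnit_one
    simpa using mul_mem (inv_mem (hL s)) (mem_of_isUnit_apply_one_zero hL hU hsg)
  · exact mem_of_isUnit_apply_one_zero hL hU hc

theorem _root_.Subgroup.Normal.eq_top_of_lowerUnipotent_mem [IsLocalRing R]
    (hH : H.Normal) (hL : ∀ c, lowerUnipotent c ∈ H) : H = ⊤ :=
  eq_top_of_unipotent_mem hL fun c => upperUnipotent_eq_conj c ▸ hH.conj_mem _ (hL _) _

end Matrix.SpecialLinearGroup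

open Matrix.SpecialLinearGroup in
theorem normal_subgroup_containing_unipotents_eq_top_general
    (R : Type*) [CommRing R] [IsDomain R] [IsDiscreteValuationRing R]
    (hodd : Odd (Nat.card (IsLocalRing.ResidueField R)))
    (N : Subgroup (Matrix.SpecialLinearGroup (Fin 2) R)) (hN : N.Normal)
    (hU : ∀ (c : Rˣ) (g : Matrix.SpecialLinearGroup (Fin 2) R),
      (g : Matrix (Fin 2) (Fin 2) R) = !![1, 0; (↑c : R), 1] → g ∈ N) :
    N = ⊤ := by
  have h2 := IsLocalRing.isUnit_two_of_odd_card_residueField hodd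
  refine hN.eq_top_of_lowerUnipotent_mem fun c => ?_
  obtain ⟨u, v, rfl⟩ := IsLocalRing.exists_units_add_eq_of_isUnit_two h2 c
  rw [lowerUnipotent_add]
  exact mul_mem (hU u _ (coe_lowerUnipotent _)) (hU v _ (coe_lowerUnipotent _))

/-- The set `U^op = { [[1,0],[c,1]] : c ∈ R^× }` of lower unipotent matrices with unit
entry is contained in no proper normal subgroup of `SL₂(R)`: any normal subgroup
containing it is all of `SL₂(R)`. -/
theorem normal_subgroup_containing_unipotents_eq_top
    (R : Type*) [CommRing R] [IsDomain R] [IsDiscreteValuationRing R]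
    [IsAdicComplete (IsLocalRing.maximalIdeal R) R]
    [Finite (IsLocalRing.ResidueField R)]
    (hodd : Odd (Nat.card (IsLocalRing.ResidueField R)))
    (N : Subgroup (Matrix.SpecialLinearGroup (Fin 2) R)) (hN : N.Normal)
    (hU : ∀ (c : Rˣ) (g : Matrix.SpecialLinearGroup (Fin 2) R),
      (g : Matrix (Fin 2) (Fin 2) R) = !![1, 0; (↑c : R), 1] → g ∈ N) :
    N = ⊤ :=
  normal_subgroup_containing_unipotents_eq_top_general R hodd N hN hU
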